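/- Fix an integer m ≥ 2, a positive integer n, and a real ε with 0 < ε < 1. Then the number of tuples (z_1, ..., z_n) ∈ {0, 1, ..., m−1}^n whose associated multiset Z = {z_1, ..., z_n} satisfies disc(Z, m) ≥ ε is at most 4m · exp(−n·ε²/8) · m^n. Equivalently, if Z is a random multiset of size n whose elements are chosen independently and uniformly at random from {0, 1, ..., m−1}, then Prob[disc(Z, m) ≥ ε] ≤ 4m · exp(−n·ε²/8). -/

import Mathlib

/-- The `m`-discrepancy of a finite multiset `Z` of integers:
`disc(Z, m) = max_{k = 1, …, m−1} |(1/|Z|) · Σ_{z ∈ Z} exp(2πi·k·z/m)|`,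
with the convention `disc(∅, m) = 0`. -/
noncomputable def disc (Z : Multiset ℤ) (m : ℕ) : ℝ :=
  if h : (Finset.Ioo 0 m).Nonempty then
    (Finset.Ioo 0 m).sup' h fun k =>
      ‖(Z.map fun z : ℤ =>
        Complex.exp (2 * Real.pi * Complex.I * (k : ℂ) * (z : ℂ) / (m : ℂ))).sum‖ / (Z.card : ℝ)
  else 0

/-!
For `0 < k < m` the values `w ↦ exp(2πikw/m)` on `{0, …, m-1}` are unit complex numbers summing
to zero. If `disc(Z, m) ≥ ε`, then for one such `k` the sum `S = ∑ⱼ exp(2πik zⱼ/m)` has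
`‖S‖ ≥ nε`, and since `‖S‖ ≤ |Re S| + |Im S|`, one of the four real parts `Re(iʲ S)` is at least
`nε/2`. Each of these `4(m-1)` events is a large deviation of a sum of `n` independent uniform
samples of a mean-zero function bounded by `1`. Hoeffding's argument bounds it: by convexity
`exp(λx) ≤ cosh λ + x sinh λ` for `|x| ≤ 1`, and `cosh λ ≤ exp(λ²/2)`, so the exponential moment
method with `λ = ε/2` gives the factor `exp(-n(ε/2)²/2) = exp(-nε²/8)`.
-/

open Finset

section Hoeffding

open Real

variable {ι α : Type*} [Fintype ι] [DecidableEq ι] [Fintype α]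

theorem card_filter_mul_exp_le_sum_exp_pow (g : α → ℝ) {l : ℝ} (hl : 0 ≤ l) (t : ℝ) :
    #{z : ι → α | t ≤ ∑ i, g (z i)} * rexp (l * t) ≤ (∑ a, rexp (l * g a)) ^ Fintype.card ι :=
  calc #{z : ι → α | t ≤ ∑ i, g (z i)} * rexp (l * t)
      = ∑ z ∈ {z : ι → α | t ≤ ∑ i, g (z i)}, rexp (l * t) := by
        rw [sum_const, nsmul_eq_mul]
    _ ≤ ∑ z ∈ {z : ι → α | t ≤ ∑ i, g (z i)}, rexp (l * ∑ i, g (z i)) :=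
        sum_le_sum fun z hz => exp_le_exp.2 (mul_le_mul_of_nonneg_left (mem_filter.1 hz).2 hl)
    _ ≤ ∑ z : ι → α, rexp (l * ∑ i, g (z i)) :=
        sum_le_sum_of_subset_of_nonneg (filter_subset _ _) fun _ _ _ => (exp_pos _).le
    _ = ∑ z : ι → α, ∏ i, rexp (l * g (z i)) := by simp only [mul_sum, exp_sum]
    _ = (∑ a, rexp (l * g a)) ^ Fintype.card ι := by
        rw [← Fintype.prod_sum (fun (_ : ι) a => rexp (l * g a)), prod_const, card_univ]

omit [Fintype ι] [DecidableEq ι] in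
theorem sum_exp_mul_le_card_mul_exp_sq {g : α → ℝ} (hg : ∀ a, |g a| ≤ 1) (hg0 : ∑ a, g a = 0)
    (l : ℝ) : ∑ a, rexp (l * g a) ≤ Fintype.card α * rexp (l ^ 2 / 2) :=
  calc ∑ a, rexp (l * g a) = ∑ a, rexp (g a * l) := by simp only [mul_comm]
    _ ≤ ∑ a, (cosh l + g a * sinh l) := sum_le_sum fun a _ => exp_mul_le_cosh_add_mul_sinh (hg a) l
    _ = Fintype.card α * cosh l := by
        rw [sum_add_distrib, ← sum_mul, hg0, sum_const, card_univ, nsmul_eq_mul]; ring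
    _ ≤ Fintype.card α * rexp (l ^ 2 / 2) := by gcongr; exact cosh_le_exp_half_sq l

theorem card_filter_le_sum_le_of_sum_eq_zero {g : α → ℝ} (hg : ∀ a, |g a| ≤ 1) (hg0 : ∑ a, g a = 0)
    {ε : ℝ} (hε : 0 ≤ ε) :
    (#{z : ι → α | Fintype.card ι * ε ≤ ∑ i, g (z i)} : ℝ) ≤
      Fintype.card α ^ Fintype.card ι * rexp (-(Fintype.card ι * ε ^ 2) / 2) := by
  set n := Fintype.card ι
  have hmgf := card_filter_mul_exp_le_sum_exp_pow (ι := ι) g hε (n * ε)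
  have hpow : (∑ a, rexp (ε * g a)) ^ n ≤ (Fintype.card α * rexp (ε ^ 2 / 2)) ^ n :=
    pow_le_pow_left₀ (sum_nonneg fun _ _ => (exp_pos _).le)
      (sum_exp_mul_le_card_mul_exp_sq hg hg0 ε) n
  rw [← le_div_iff₀ (exp_pos _)] at hmgf
  calc _ ≤ _ := hmgf.trans (div_le_div_of_nonneg_right hpow (exp_pos _).le)
    _ = _ := by
        rw [mul_pow, ← exp_nat_mul, mul_div_assoc, ← exp_sub]
        ring_nf

end Hoeffding

theorem Complex.exists_norm_le_two_mul_re_I_pow_mul (w : ℂ) :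
    ∃ j : Fin 4, ‖w‖ ≤ 2 * (I ^ (j : ℕ) * w).re := by
  have hre : ∀ j : Fin 4, (I ^ (j : ℕ) * w).re = ![w.re, -w.im, -w.re, w.im] j := by
    intro j; fin_cases j <;> simp [pow_succ]
  simp only [hre]
  have hw := norm_le_abs_re_add_abs_im w
  rcases le_total |w.re| |w.im| with h | h <;>
    rcases abs_cases w.re with ⟨_, _⟩ | ⟨_, _⟩ <;>
    rcases abs_cases w.im with ⟨_, _⟩ | ⟨_, _⟩
  all_goals first
    | exact ⟨0, by simp; linarith⟩ | exact ⟨1, by simp; linarith⟩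
    | exact ⟨2, by simp; linarith⟩ | exact ⟨3, by simp; linarith⟩

theorem card_filter_le_norm_sum_le_of_sum_eq_zero {ι α : Type*} [Fintype ι] [DecidableEq ι]
    [Fintype α] {f : α → ℂ} (hf : ∀ a, ‖f a‖ ≤ 1) (hf0 : ∑ a, f a = 0) {ε : ℝ} (hε : 0 ≤ ε) :
    (#{z : ι → α | Fintype.card ι * ε ≤ ‖∑ i, f (z i)‖} : ℝ) ≤
      4 * Fintype.card α ^ Fintype.card ι * Real.exp (-(Fintype.card ι * ε ^ 2) / 8) := by
  classical
  set n := Fintype.card ι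
  set B : Fin 4 → Finset (ι → α) := fun j =>
    {z | n * (ε / 2) ≤ ∑ i, (Complex.I ^ (j : ℕ) * f (z i)).re}
  have hsub : ({z : ι → α | n * ε ≤ ‖∑ i, f (z i)‖} : Finset _) ⊆ univ.biUnion B := by
    intro z hz
    obtain ⟨j, hj⟩ := Complex.exists_norm_le_two_mul_re_I_pow_mul (∑ i, f (z i))
    simp only [mem_filter, mem_univ, true_and] at hz
    simp only [B, mem_biUnion, mem_univ, true_and, mem_filter]
    refine ⟨j, ?_⟩
    rw [← Complex.re_sum, ← mul_sum]
    linarith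
  have hB : ∀ j, (#(B j) : ℝ) ≤ Fintype.card α ^ n * Real.exp (-(n * ε ^ 2) / 8) := fun j => by
    have := card_filter_le_sum_le_of_sum_eq_zero (ι := ι) (ε := ε / 2)
      (g := fun a => (Complex.I ^ (j : ℕ) * f a).re)
      (fun a => (Complex.abs_re_le_norm _).trans (by simpa using hf a))
      (by rw [← Complex.re_sum, ← mul_sum, hf0, mul_zero, Complex.zero_re]) (by positivity)
    convert this using 3
    ring
  calc (#{z : ι → α | n * ε ≤ ‖∑ i, f (z i)‖} : ℝ)
      ≤ ∑ j, (#(B j) : ℝ) := by exact_mod_cast (card_le_card hsub).trans card_biUnion_le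
    _ ≤ ∑ _j : Fin 4, Fintype.card α ^ n * Real.exp (-(n * ε ^ 2) / 8) := sum_le_sum fun j _ => hB j
    _ = _ := by simp; ring

theorem IsPrimitiveRoot.sum_range_pow_mul_eq_zero {R : Type*} [CommRing R] [IsDomain R] {ζ : R}
    {m k : ℕ} (hζ : IsPrimitiveRoot ζ m) (hk0 : k ≠ 0) (hkm : k < m) :
    ∑ i ∈ range m, ζ ^ (k * i) = 0 := by
  have hne : ζ ^ k - 1 ≠ 0 := sub_ne_zero.2 (hζ.pow_ne_one_of_pos_of_lt hk0 hkm)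
  have hgeom := geom_sum_mul (ζ ^ k) m
  rw [← pow_mul, mul_comm k m, pow_mul, hζ.pow_eq_one, one_pow, sub_self] at hgeom
  simpa only [pow_mul] using (mul_eq_zero.1 hgeom).resolve_right hne

section AddCharacter

open Complex Real

theorem Complex.norm_exp_two_pi_I_mul_div (m k w : ℕ) : ‖cexp (2 * π * I * k * w / m)‖ = 1 := by
  rw [Complex.norm_exp]; simp

theorem Complex.sum_exp_two_pi_I_mul_div_eq_zero {m k : ℕ} (hk0 : k ≠ 0) (hkm : k < m) :
    ∑ w : Fin m, cexp (2 * π * I * k * (w : ℕ) / m) = 0 := by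
  have hζ := isPrimitiveRoot_exp m (by omega)
  rw [Fin.sum_univ_eq_sum_range (fun w => cexp (2 * π * I * k * w / m)),
    ← hζ.sum_range_pow_mul_eq_zero hk0 hkm]
  refine sum_congr rfl fun w _ => ?_
  rw [← exp_nat_mul]; push_cast; ring_nf

theorem exists_le_norm_sum_of_le_disc {ι : Type*} [Fintype ι] (x : ι → ℤ) {m : ℕ} {ε : ℝ}
    (hε : 0 < ε) (h : ε ≤ disc (univ.val.map x) m) :
    ∃ k ∈ Ioo 0 m, Fintype.card ι * ε ≤ ‖∑ i, cexp (2 * π * I * k * x i / m)‖ := by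
  unfold disc at h
  split_ifs at h with hne
  · obtain ⟨k, hk, hle⟩ := (le_sup'_iff hne).1 h
    rw [Multiset.map_map, Multiset.card_map, card_val, card_univ] at hle
    exact ⟨k, hk, by rw [mul_comm]; exact mul_le_of_le_div₀ (norm_nonneg _) (Nat.cast_nonneg _) hle⟩
  · exact absurd h hε.not_ge

end AddCharacter

open Classical in
theorem stmt_7 (m n : ℕ) (ε : ℝ) (hε0 : 0 < ε) :
    ((Finset.univ.filter fun z : Fin n → Fin m =>
        ε ≤ disc (Multiset.map (fun i => ((z i : ℕ) : ℤ)) Finset.univ.val) m).card : ℝ) ≤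
      4 * m * Real.exp (-(n * ε ^ 2) / 8) * (m : ℝ) ^ n := by
  set χ : ℕ → Fin m → ℂ := fun k w => Complex.exp (2 * Real.pi * Complex.I * k * (w : ℕ) / m)
  set bound := 4 * (m : ℝ) ^ n * Real.exp (-(n * ε ^ 2) / 8)
  have hsub : ({z : Fin n → Fin m | ε ≤ disc (Multiset.map (fun i => ((z i : ℕ) : ℤ)) univ.val) m}
      : Finset _) ⊆ (Ioo 0 m).biUnion fun k => {z : Fin n → Fin m | n * ε ≤ ‖∑ i, χ k (z i)‖} := by
    intro z hz
    obtain ⟨k, hk, hle⟩ := exists_le_norm_sum_of_le_disc _ hε0 (mem_filter.1 hz).2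
    simp only [Fintype.card_fin, Int.cast_natCast] at hle
    exact mem_biUnion.2 ⟨k, hk, mem_filter.2 ⟨mem_univ _, hle⟩⟩
  have hcard : ∀ k ∈ Ioo 0 m, (#{z : Fin n → Fin m | n * ε ≤ ‖∑ i, χ k (z i)‖} : ℝ) ≤ bound :=
    fun k hk => by
      simpa using card_filter_le_norm_sum_le_of_sum_eq_zero (ι := Fin n) (f := χ k)
        (fun w => (Complex.norm_exp_two_pi_I_mul_div m k w).le)
        (Complex.sum_exp_two_pi_I_mul_div_eq_zero (mem_Ioo.1 hk).1.ne' (mem_Ioo.1 hk).2) hε0.le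
  calc _ ≤ ∑ k ∈ Ioo 0 m, (#{z : Fin n → Fin m | n * ε ≤ ‖∑ i, χ k (z i)‖} : ℝ) := by
        exact_mod_cast (card_le_card hsub).trans card_biUnion_le
    _ ≤ ∑ _k ∈ Ioo 0 m, bound := sum_le_sum hcard
    _ ≤ m * bound := by
        rw [sum_const, nsmul_eq_mul, Nat.card_Ioo]
        gcongr
        exact_mod_cast Nat.sub_le m 1
    _ = _ := by ring
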